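/- Let (G,Λ) be a self-similar k-graph. The tight groupoid G_tight(S_{G,Λ}) is Hausdorff if and only if for every g ∈ G \ {e_G}, the set SF_g of paths strongly fixed by g is locally exhausted: for every vertex v there is a finite subset M ⊆ v·SF_g such that every τ ∈ v·SF_g satisfies Λ^min(τ,τ') ≠ ∅ for some τ' ∈ M. Equivalently (via the Exel–Pardo criterion), every principal ideal J_F, F ∈ S_{G,Λ}, admits a finite cover in E(S_{G,Λ}) if and only if every SF_g (g ≠ e_G) is locally exhausted. -/
import Mathlib


/-- A `k`-graph: a countable small category with degree functor to `ℕ^k`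
satisfying the unique factorization property.  Objects (vertices) are
identified with the paths of degree `0`. -/
structure KGraph (k : ℕ) where
  Path : Type
  countable : Countable Path
  src : Path → Path
  rng : Path → Path
  deg : Path → Fin k → ℕ
  comp : (μ ν : Path) → src μ = rng ν → Path
  deg_src : ∀ μ, deg (src μ) = 0
  deg_rng : ∀ μ, deg (rng μ) = 0
  src_vtx : ∀ μ, deg μ = 0 → src μ = μ
  rng_vtx : ∀ μ, deg μ = 0 → rng μ = μ
  src_comp : ∀ μ ν h, src (comp μ ν h) = src ν
  rng_comp : ∀ μ ν h, rng (comp μ ν h) = rng μ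
  deg_comp : ∀ μ ν h, deg (comp μ ν h) = deg μ + deg ν
  comp_assoc : ∀ μ ν ρ (h1 : src μ = rng ν) (h2 : src (comp μ ν h1) = rng ρ)
    (h3 : src ν = rng ρ) (h4 : src μ = rng (comp ν ρ h3)),
    comp (comp μ ν h1) ρ h2 = comp μ (comp ν ρ h3) h4
  rng_id_comp : ∀ μ (h : src (rng μ) = rng μ), comp (rng μ) μ h = μ
  comp_src_id : ∀ μ (h : src μ = rng (src μ)), comp μ (src μ) h = μ
  factor : ∀ μ (m n : Fin k → ℕ), deg μ = m + n →
    ∃! p : Path × Path, ∃ h : src p.1 = rng p.2,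
      deg p.1 = m ∧ deg p.2 = n ∧ comp p.1 p.2 h = μ

namespace KGraph

variable {k : ℕ}

/-- The set `Λ^min(μ,ν)` of pairs `(α,β)` with `μα = νβ` a minimal common
extension of `μ` and `ν`. -/
def lmin (Λ : KGraph k) (μ ν : Λ.Path) : Set (Λ.Path × Λ.Path) :=
  {p | ∃ (h1 : Λ.src μ = Λ.rng p.1) (h2 : Λ.src ν = Λ.rng p.2),
    Λ.comp μ p.1 h1 = Λ.comp ν p.2 h2 ∧
    Λ.deg μ + Λ.deg p.1 = Λ.deg μ ⊔ Λ.deg ν}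

/-- `Λ` is finitely aligned when every `Λ^min(μ,ν)` is finite. -/
def FinitelyAligned (Λ : KGraph k) : Prop := ∀ μ ν : Λ.Path, (Λ.lmin μ ν).Finite

/-- `X ⊆ vΛ` is exhaustive: every path with range `v` has a minimal common
extension with some member of `X`. -/
def Exhaustive (Λ : KGraph k) (v : Λ.Path) (X : Set Λ.Path) : Prop :=
  ∀ lam : Λ.Path, Λ.rng lam = v → ∃ τ ∈ X, Λ.lmin lam τ ≠ ∅

/-- `Λ` is row finite: finitely many edges of each colour into each vertex. -/
def RowFinite (Λ : KGraph k) : Prop :=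
  ∀ v : Λ.Path, Λ.deg v = 0 → ∀ i : Fin k,
    {e : Λ.Path | Λ.deg e = Pi.single i 1 ∧ Λ.rng e = v}.Finite

/-- `Λ` has no sources: every vertex receives an edge of each colour. -/
def NoSources (Λ : KGraph k) : Prop :=
  ∀ v : Λ.Path, Λ.deg v = 0 → ∀ i : Fin k,
    {e : Λ.Path | Λ.deg e = Pi.single i 1 ∧ Λ.rng e = v}.Nonempty

end KGraph

/-- A self-similar `k`-graph `(G,Λ,φ)`. -/
structure SelfSimilar (k : ℕ) (G : Type) [Group G] (Λ : KGraph k) where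
  act : G → Λ.Path → Λ.Path
  φ : G → Λ.Path → G
  act_one : ∀ μ, act 1 μ = μ
  act_mul : ∀ g h μ, act (g * h) μ = act g (act h μ)
  deg_act : ∀ g μ, Λ.deg (act g μ) = Λ.deg μ
  src_act : ∀ g μ, Λ.src (act g μ) = act g (Λ.src μ)
  rng_act : ∀ g μ, Λ.rng (act g μ) = act g (Λ.rng μ)
  φ_mul : ∀ g h μ, φ (g * h) μ = φ g (act h μ) * φ h μ
  act_comp : ∀ g μ ν (h : Λ.src μ = Λ.rng ν)
      (h' : Λ.src (act g μ) = Λ.rng (act (φ g μ) ν)),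
      act g (Λ.comp μ ν h) = Λ.comp (act g μ) (act (φ g μ) ν) h'
  φ_comp : ∀ g μ ν (h : Λ.src μ = Λ.rng ν),
      φ g (Λ.comp μ ν h) = φ (φ g μ) ν
  φ_vtx : ∀ g v, Λ.deg v = 0 → φ g v = g

variable {k : ℕ} {G : Type} [Group G] {Λ : KGraph k}

/-- Orthogonality of two triples: `Λ^min(μ,ξ) = Λ^min(ν,η) = ∅`. -/
def Orth (Λ : KGraph k) (t u : Λ.Path × G × Λ.Path) : Prop :=
  Λ.lmin t.1 u.1 = ∅ ∧ Λ.lmin t.2.2 u.2.2 = ∅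

/-- Membership in `S_{G,Λ}`: a finite set of pairwise orthogonal triples
`(μ,g,ν)` with `s(μ) = g⬝s(ν)`. -/
def IsElem (SS : SelfSimilar k G Λ) (F : Set (Λ.Path × G × Λ.Path)) : Prop :=
  F.Finite ∧ (∀ t ∈ F, Λ.src t.1 = SS.act t.2.1 (Λ.src t.2.2)) ∧
    ∀ t ∈ F, ∀ u ∈ F, t ≠ u → Orth Λ t u

/-- The multiplication of `S_{G,Λ}`. -/
def smul (SS : SelfSimilar k G Λ) (E F : Set (Λ.Path × G × Λ.Path)) :
    Set (Λ.Path × G × Λ.Path) :=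
  {t | ∃ μ g ν ξ h η α β, (μ, g, ν) ∈ E ∧ (ξ, h, η) ∈ F ∧ (α, β) ∈ Λ.lmin ν ξ ∧
    ∃ (h1 : Λ.src μ = Λ.rng (SS.act g α)) (h2 : Λ.src η = Λ.rng (SS.act h⁻¹ β)),
      t = (Λ.comp μ (SS.act g α) h1,
           SS.φ g α * SS.φ h (SS.act h⁻¹ β),
           Λ.comp η (SS.act h⁻¹ β) h2)}

/-- The involution `F* = {(ν,g⁻¹,μ) : (μ,g,ν) ∈ F}`. -/
def sstar (F : Set (Λ.Path × G × Λ.Path)) : Set (Λ.Path × G × Λ.Path) :=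
  {t | (t.2.2, t.2.1⁻¹, t.1) ∈ F}

/-- The singleton idempotent `ι_μ = {(μ,e_G,μ)}`. -/
def iota (Λ : KGraph k) (G : Type) [Group G] (μ : Λ.Path) :
    Set (Λ.Path × G × Λ.Path) := {(μ, (1 : G), μ)}

/-- Idempotents of `S_{G,Λ}`. -/
def IsIdem (SS : SelfSimilar k G Λ) (E : Set (Λ.Path × G × Λ.Path)) : Prop :=
  IsElem SS E ∧ smul SS E E = E

/-- The natural partial order of the inverse semigroup `S_{G,Λ}`:
`s ≤ t` iff `s = te` for some idempotent `e`. -/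
def leS (SS : SelfSimilar k G Λ) (s t : Set (Λ.Path × G × Λ.Path)) : Prop :=
  ∃ E, IsIdem SS E ∧ smul SS t E = s

/-- `τ` is strongly fixed by `g`. -/
def StronglyFixed (SS : SelfSimilar k G Λ) (g : G) (τ : Λ.Path) : Prop :=
  SS.act g τ = τ ∧ SS.φ g τ = 1

/-- The set `SF_g` of paths strongly fixed by `g`. -/
def SFg (SS : SelfSimilar k G Λ) (g : G) : Set Λ.Path :=
  {τ | SS.act g τ = τ ∧ SS.φ g τ = 1}

/-- `SF_g` is locally exhausted. -/
def LocallyExhausted (SS : SelfSimilar k G Λ) (g : G) : Prop :=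
  ∀ v : Λ.Path, Λ.deg v = 0 →
    ∃ M : Set Λ.Path, M.Finite ∧ (∀ τ ∈ M, τ ∈ SFg SS g ∧ Λ.rng τ = v) ∧
      ∀ τ ∈ SFg SS g, Λ.rng τ = v → ∃ τ' ∈ M, Λ.lmin τ τ' ≠ ∅

/-- The principal ideal `J_F` admits a finite cover. -/
def HasFiniteCover (SS : SelfSimilar k G Λ) (F : Set (Λ.Path × G × Λ.Path)) : Prop :=
  ∃ C : Set (Set (Λ.Path × G × Λ.Path)), C.Finite ∧
    (∀ E ∈ C, IsIdem SS E ∧ smul SS F E = E) ∧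
    ∀ E, IsIdem SS E → smul SS F E = E → E ≠ ∅ → ∃ E' ∈ C, smul SS E E' ≠ ∅

/-- A (proper, nonzero) filter in the idempotent semilattice `E(S_{G,Λ})`. -/
def IsFilterE (SS : SelfSimilar k G Λ) (𝓕 : Set (Set (Λ.Path × G × Λ.Path))) : Prop :=
  𝓕.Nonempty ∧ (∀ E ∈ 𝓕, IsIdem SS E) ∧ (∅ ∉ 𝓕) ∧
    (∀ E ∈ 𝓕, ∀ F ∈ 𝓕, smul SS E F ∈ 𝓕) ∧
    ∀ E ∈ 𝓕, ∀ F, IsIdem SS F → smul SS F E = E → F ∈ 𝓕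

/-- An ultrafilter: a maximal filter in `E(S_{G,Λ})`. -/
def IsUltrafilterE (SS : SelfSimilar k G Λ) (𝓕 : Set (Set (Λ.Path × G × Λ.Path))) : Prop :=
  IsFilterE SS 𝓕 ∧ ∀ 𝓖, IsFilterE SS 𝓖 → 𝓕 ⊆ 𝓖 → 𝓖 = 𝓕

/-- `n ≤ m` for `m ∈ (ℕ ∪ {∞})^k` and `n ∈ ℕ^k`. -/
def LeDeg {k : ℕ} (m : Fin k → ℕ∞) (n : Fin k → ℕ) : Prop :=
  ∀ i, (n i : ℕ∞) ≤ m i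

/-- A boundary path `x` of a finitely aligned `k`-graph, recorded via its
degree `d(x) ∈ (ℕ∪{∞})^k` and its initial segments `x(0,n)` for `n ≤ d(x)`. -/
structure BoundaryPath (Λ : KGraph k) where
  bdeg : Fin k → ℕ∞
  seg : (Fin k → ℕ) → Λ.Path
  deg_seg : ∀ n, LeDeg bdeg n → Λ.deg (seg n) = n
  rng_seg : ∀ n, LeDeg bdeg n → Λ.rng (seg n) = seg 0
  seg_comp : ∀ m n : Fin k → ℕ, LeDeg bdeg (m + n) →
    ∃ (τ : Λ.Path) (h : Λ.src (seg m) = Λ.rng τ),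
      Λ.deg τ = n ∧ seg (m + n) = Λ.comp (seg m) τ h
  seg_junk : ∀ n, ¬ LeDeg bdeg n → seg n = seg 0
  boundary : ∀ n, LeDeg bdeg n → ∀ X : Set Λ.Path, X.Finite →
    (∀ τ ∈ X, Λ.rng τ = Λ.src (seg n) ∧ τ ≠ Λ.src (seg n)) →
    KGraph.Exhaustive Λ (Λ.src (seg n)) X →
    ∃ τ ∈ X, ∃ (_ : LeDeg bdeg (n + Λ.deg τ)) (h : Λ.src (seg n) = Λ.rng τ),
      seg (n + Λ.deg τ) = Λ.comp (seg n) τ h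

/-- `z = σ^n(x)`, the shift of the boundary path `x` by `n`. -/
def IsShift (Λ : KGraph k) (x : BoundaryPath Λ) (n : Fin k → ℕ)
    (z : BoundaryPath Λ) : Prop :=
  (∀ i, z.bdeg i = x.bdeg i - (n i : ℕ∞)) ∧
    ∀ p, LeDeg z.bdeg p → ∃ h : Λ.src (x.seg n) = Λ.rng (z.seg p),
      x.seg (n + p) = Λ.comp (x.seg n) (z.seg p) h

/-- `z = g⬝x` for boundary paths. -/
def IsActB (SS : SelfSimilar k G Λ) (g : G) (x z : BoundaryPath Λ) : Prop :=
  z.bdeg = x.bdeg ∧ ∀ p, LeDeg x.bdeg p → z.seg p = SS.act g (x.seg p)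

/-- `y = lam⬝z`, the concatenation of a finite path with a boundary path. -/
def IsCompB (Λ : KGraph k) (lam : Λ.Path) (z y : BoundaryPath Λ) : Prop :=
  (∀ i, y.bdeg i = (Λ.deg lam i : ℕ∞) + z.bdeg i) ∧
    ∀ p, LeDeg z.bdeg p → ∃ h : Λ.src lam = Λ.rng (z.seg p),
      y.seg (Λ.deg lam + p) = Λ.comp lam (z.seg p) h

/-- `x ∈ Z(lam)`, i.e. `x(0,d(lam)) = lam`. -/
def InZ (Λ : KGraph k) (x : BoundaryPath Λ) (lam : Λ.Path) : Prop :=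
  LeDeg x.bdeg (Λ.deg lam) ∧ x.seg (Λ.deg lam) = lam

/-- `y` is a fixed point for `θ_{{(μ,g,ν)}}`: `y ∈ Z(ν)` and `μ(g⬝σ^{d(ν)}(y)) = y`. -/
def FixedPt (SS : SelfSimilar k G Λ) (μ : Λ.Path) (g : G) (ν : Λ.Path)
    (y : BoundaryPath Λ) : Prop :=
  InZ Λ y ν ∧ ∃ z w, IsShift Λ y (Λ.deg ν) z ∧ IsActB SS g z w ∧ IsCompB Λ μ w y

/-- `y` is an interior fixed point for `θ_{{(μ,g,ν)}}`: some cylinder containing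
`y` consists entirely of fixed points. -/
def InteriorFixedPt (SS : SelfSimilar k G Λ) (μ : Λ.Path) (g : G) (ν : Λ.Path)
    (y : BoundaryPath Λ) : Prop :=
  ∃ η : Λ.Path, InZ Λ y η ∧ ∀ y', InZ Λ y' η → FixedPt SS μ g ν y'

/-- `G`-aperiodic condition (A). -/
def CondA (SS : SelfSimilar k G Λ) : Prop :=
  ∀ v : Λ.Path, Λ.deg v = 0 → ∃ x : BoundaryPath Λ, x.seg 0 = v ∧
    ∀ (m n : Fin k → ℕ), LeDeg x.bdeg m → LeDeg x.bdeg n →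
      ∀ (g : G) (z w : BoundaryPath Λ),
        IsShift Λ x m z → IsShift Λ x n w → IsActB SS g w z → m = n

/-- `(G,Λ)` is `G`-cofinal. -/
def GCofinal (SS : SelfSimilar k G Λ) : Prop :=
  ∀ v : Λ.Path, Λ.deg v = 0 → ∀ x : BoundaryPath Λ,
    ∃ n : Fin k → ℕ, LeDeg x.bdeg n ∧ ∃ (g : G) (p : Λ.Path),
      Λ.rng p = v ∧ Λ.src p = SS.act g (Λ.src (x.seg n))

/-- The ultrafilter `F_x` associated to a boundary path `x`. -/
def Fx (SS : SelfSimilar k G Λ) (x : BoundaryPath Λ) :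
    Set (Set (Λ.Path × G × Λ.Path)) :=
  {E | IsIdem SS E ∧ ∃ n : Fin k → ℕ, LeDeg x.bdeg n ∧
    (x.seg n, (1 : G), x.seg n) ∈ E}

/-! ### Auxiliary lemmas -/

section Aux

lemma pi_zero_sup (d : Fin k → ℕ) : (0 : Fin k → ℕ) ⊔ d = d :=
  sup_eq_right.mpr (by intro i; exact Nat.zero_le _)

lemma pi_sup_self_add (d e : Fin k → ℕ) : d ⊔ (d + e) = d + e :=
  sup_eq_right.mpr (by intro i; exact Nat.le_add_right _ _)

lemma pi_sup_idem (d : Fin k → ℕ) : d ⊔ d = d := sup_idem d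

lemma pi_add_sup (m a b : Fin k → ℕ) : (m + a) ⊔ (m + b) = m + (a ⊔ b) := by
  funext i
  simp only [Pi.sup_apply, Pi.add_apply]
  exact max_add_add_left _ _ _

/-- A path of degree `0` equals its own range. -/
lemma vtx_eq_rng {α : Λ.Path} (h : Λ.deg α = 0) : α = Λ.rng α := (Λ.rng_vtx α h).symm

lemma comp_congr {μ ν ν' : Λ.Path} (e : ν = ν') (h : Λ.src μ = Λ.rng ν)
    (h' : Λ.src μ = Λ.rng ν') : Λ.comp μ ν h = Λ.comp μ ν' h' := by subst e; rfl

lemma comp_congr_left {μ μ' ν : Λ.Path} (e : μ = μ') (h : Λ.src μ = Λ.rng ν)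
    (h' : Λ.src μ' = Λ.rng ν) : Λ.comp μ ν h = Λ.comp μ' ν h' := by subst e; rfl

lemma comp_vtx_left {v α : Λ.Path} (hv : Λ.deg v = 0) (h : Λ.src v = Λ.rng α) :
    Λ.comp v α h = α := by
  have e : v = Λ.rng α := (Λ.src_vtx v hv) ▸ h
  subst e
  exact Λ.rng_id_comp α h

lemma comp_vtx_right {α v : Λ.Path} (hv : Λ.deg v = 0) (h : Λ.src α = Λ.rng v) :
    Λ.comp α v h = α := by
  have e : v = Λ.src α := by rw [← Λ.rng_vtx v hv, ← h]
  subst e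
  exact Λ.comp_src_id α h

/-- Uniqueness of factorizations with matching degrees. -/
lemma factor_pair_eq {μ a μ' a' : Λ.Path} (h : Λ.src μ = Λ.rng a)
    (h' : Λ.src μ' = Λ.rng a') (e : Λ.comp μ a h = Λ.comp μ' a' h')
    (dμ : Λ.deg μ = Λ.deg μ') (da : Λ.deg a = Λ.deg a') : μ = μ' ∧ a = a' := by
  obtain ⟨p, -, huniq⟩ := Λ.factor (Λ.comp μ a h) (Λ.deg μ) (Λ.deg a) (Λ.deg_comp μ a h)
  have h1 : ((μ, a) : Λ.Path × Λ.Path) = p := huniq (μ, a) ⟨h, rfl, rfl, rfl⟩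
  have h2 : ((μ', a') : Λ.Path × Λ.Path) = p :=
    huniq (μ', a') ⟨h', dμ.symm, da.symm, e.symm⟩
  have := h1.trans h2.symm
  exact ⟨congrArg Prod.fst this, congrArg Prod.snd this⟩

/-- Left cancellation for composition. -/
lemma cancel_left {μ a b : Λ.Path} (h1 : Λ.src μ = Λ.rng a) (h2 : Λ.src μ = Λ.rng b)
    (he : Λ.comp μ a h1 = Λ.comp μ b h2) : a = b := by
  have hd : Λ.deg a = Λ.deg b := by
    have := congrArg Λ.deg he
    rw [Λ.deg_comp, Λ.deg_comp] at this
    exact add_left_cancel this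
  exact (factor_pair_eq h1 h2 he rfl hd).2

/-- Prefix lemma: an initial segment of `μc` of degree `≥ deg μ` extends `μ`. -/
lemma prefix_lemma {μ c σ τ : Λ.Path} (hμc : Λ.src μ = Λ.rng c)
    (hστ : Λ.src σ = Λ.rng τ) (e : Λ.comp μ c hμc = Λ.comp σ τ hστ)
    (hle : Λ.deg μ ≤ Λ.deg σ) :
    ∃ (a : Λ.Path) (ha : Λ.src μ = Λ.rng a), σ = Λ.comp μ a ha := by
  have hdeg : Λ.deg μ + Λ.deg c = Λ.deg σ + Λ.deg τ := by
    rw [← Λ.deg_comp μ c hμc, e, Λ.deg_comp]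
  set m := Λ.deg σ - Λ.deg μ with hm
  have hσm : Λ.deg μ + m = Λ.deg σ := funext fun i => Nat.add_sub_cancel' (hle i)
  have hc : Λ.deg c = m + Λ.deg τ := by
    have : Λ.deg μ + Λ.deg c = Λ.deg μ + (m + Λ.deg τ) := by
      rw [← add_assoc, hσm, hdeg]
    exact add_left_cancel this
  obtain ⟨⟨c1, c2⟩, ⟨hc12, hd1, hd2, hcc⟩, -⟩ := Λ.factor c m (Λ.deg τ) hc
  have hr : Λ.src μ = Λ.rng c1 := by rw [hμc, ← hcc, Λ.rng_comp]
  have hr2 : Λ.src (Λ.comp μ c1 hr) = Λ.rng c2 := by rw [Λ.src_comp]; exact hc12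
  have hassoc : Λ.comp μ c hμc = Λ.comp (Λ.comp μ c1 hr) c2 hr2 := by
    rw [Λ.comp_assoc μ c1 c2 hr hr2 hc12 (by rw [hcc]; exact hμc)]
    exact (comp_congr hcc.symm hμc _).symm |>.symm
  have := factor_pair_eq hστ hr2 (e.symm.trans hassoc) (by rw [Λ.deg_comp, hd1, hσm])
    (by rw [hd2])
  exact ⟨c1, hr, this.1⟩

/-- Existence of a common extension implies `Λ^min` is nonempty. -/
lemma mce {μ ν a b : Λ.Path} (ha : Λ.src μ = Λ.rng a) (hb : Λ.src ν = Λ.rng b)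
    (e : Λ.comp μ a ha = Λ.comp ν b hb) : (Λ.lmin μ ν).Nonempty := by
  set n := Λ.deg μ ⊔ Λ.deg ν with hn
  have hd1 : Λ.deg (Λ.comp μ a ha) = Λ.deg μ + Λ.deg a := Λ.deg_comp _ _ _
  have hd2 : Λ.deg (Λ.comp μ a ha) = Λ.deg ν + Λ.deg b := by rw [e]; exact Λ.deg_comp _ _ _
  have hnle : n ≤ Λ.deg μ + Λ.deg a := by
    apply sup_le
    · intro i; exact Nat.le_add_right _ _
    · rw [← hd1, hd2]; intro i; exact Nat.le_add_right _ _
  have hfac : Λ.deg (Λ.comp μ a ha) = n + (Λ.deg μ + Λ.deg a - n) := by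
    rw [hd1]; exact funext fun i => (Nat.add_sub_cancel' (hnle i)).symm
  obtain ⟨⟨σ, τ'⟩, ⟨hστ, hdσ, hdτ, hcc⟩, -⟩ :=
    Λ.factor (Λ.comp μ a ha) n (Λ.deg μ + Λ.deg a - n) hfac
  obtain ⟨a0, ha0, hσa⟩ := prefix_lemma ha hστ hcc.symm (hdσ ▸ le_sup_left)
  obtain ⟨b0, hb0, hσb⟩ := prefix_lemma hb hστ (e.symm.trans hcc.symm) (hdσ ▸ le_sup_right)
  refine ⟨(a0, b0), ha0, hb0, ?_, ?_⟩
  · exact hσa.symm.trans hσb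
  · show Λ.deg μ + Λ.deg a0 = Λ.deg μ ⊔ Λ.deg ν
    have h' : Λ.deg σ = Λ.deg μ + Λ.deg a0 := by
      rw [show σ = Λ.comp μ a0 ha0 from hσa]; exact Λ.deg_comp _ _ _
    rw [← h']; exact hdσ

/-- Characterisation of `Λ^min(λ,λ)`. -/
lemma lmin_self (lam : Λ.Path) : Λ.lmin lam lam = {(Λ.src lam, Λ.src lam)} := by
  ext ⟨a, b⟩
  constructor
  · rintro ⟨h1, h2, heq, hdeg⟩
    rw [pi_sup_idem] at hdeg
    have hda : Λ.deg a = 0 := by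
      have := (left_eq_add (a := Λ.deg lam)).mp hdeg.symm
      exact this
    have hdb : Λ.deg b = 0 := by
      have := congrArg Λ.deg heq
      rw [Λ.deg_comp, Λ.deg_comp] at this
      have := add_left_cancel this
      rw [← this, hda]
    have ha : a = Λ.src lam := by rw [vtx_eq_rng hda, ← h1]
    have hb : b = Λ.src lam := by rw [vtx_eq_rng hdb, ← h2]
    simp [ha, hb]
  · rintro h
    rw [Set.mem_singleton_iff, Prod.mk.injEq] at h
    obtain ⟨rfl, rfl⟩ := h
    have h1 : Λ.src lam = Λ.rng (Λ.src lam) :=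
      (Λ.rng_vtx _ (Λ.deg_src lam)).symm
    refine ⟨h1, h1, rfl, ?_⟩
    rw [Λ.deg_src, add_zero, pi_sup_idem]

/-- `Λ^min(v,ξ)` for a vertex `v`. -/
lemma mem_lmin_vtx {v ξ : Λ.Path} {a b : Λ.Path} (hv : Λ.deg v = 0)
    (hm : (a, b) ∈ Λ.lmin v ξ) : Λ.rng ξ = v ∧ a = ξ ∧ b = Λ.src ξ := by
  obtain ⟨h1, h2, heq, hdeg⟩ := hm
  rw [comp_vtx_left hv] at heq
  rw [hv, zero_add, pi_zero_sup] at hdeg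
  have hdb : Λ.deg b = 0 := by
    have := congrArg Λ.deg heq
    rw [Λ.deg_comp, hdeg] at this
    exact (left_eq_add.mp this)
  have hb : b = Λ.src ξ := by rw [vtx_eq_rng hdb, ← h2]
  have heq' : a = Λ.comp ξ b h2 := heq
  have hab : a = ξ := heq'.trans (comp_vtx_right hdb h2)
  refine ⟨?_, hab, hb⟩
  rw [← hab, ← h1, Λ.src_vtx v hv]

lemma vtx_mem_lmin {v ξ : Λ.Path} (hv : Λ.deg v = 0) (hr : Λ.rng ξ = v) :
    (ξ, Λ.src ξ) ∈ Λ.lmin v ξ := by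
  have h1 : Λ.src v = Λ.rng ξ := by rw [Λ.src_vtx v hv, hr]
  have h2 : Λ.src ξ = Λ.rng (Λ.src ξ) := (Λ.rng_vtx _ (Λ.deg_src ξ)).symm
  refine ⟨h1, h2, ?_, ?_⟩
  · rw [comp_vtx_left hv h1, Λ.comp_src_id ξ h2]
  · rw [hv, zero_add, pi_zero_sup]

/-- Extension of minimal common extensions. -/
lemma lmin_comp_comp {ν α τ a b : Λ.Path} (hα : Λ.src ν = Λ.rng α)
    (hτ : Λ.src ν = Λ.rng τ) (hm : (a, b) ∈ Λ.lmin α τ) :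
    (a, b) ∈ Λ.lmin (Λ.comp ν α hα) (Λ.comp ν τ hτ) := by
  obtain ⟨h1, h2, heq, hdeg⟩ := hm
  have h1' : Λ.src (Λ.comp ν α hα) = Λ.rng a := by rw [Λ.src_comp]; exact h1
  have h2' : Λ.src (Λ.comp ν τ hτ) = Λ.rng b := by rw [Λ.src_comp]; exact h2
  refine ⟨h1', h2', ?_, ?_⟩
  · rw [Λ.comp_assoc ν α a hα h1' h1 (by rw [hα, ← Λ.rng_comp α a h1]),
      Λ.comp_assoc ν τ b hτ h2' h2 (by rw [hτ, ← Λ.rng_comp τ b h2])]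
    exact comp_congr heq _ _
  · rw [Λ.deg_comp, Λ.deg_comp, add_assoc]
    show Λ.deg ν + (Λ.deg α + Λ.deg a) = _
    rw [hdeg, pi_add_sup]

/-- Characterisation of `Λ^min(ν, ντ')`. -/
lemma mem_lmin_comp_right {ν τ' a b : Λ.Path} (h : Λ.src ν = Λ.rng τ')
    (hm : (a, b) ∈ Λ.lmin ν (Λ.comp ν τ' h)) : a = τ' ∧ b = Λ.src τ' := by
  obtain ⟨h1, h2, heq, hdeg⟩ := hm
  rw [Λ.deg_comp, pi_sup_self_add] at hdeg
  have hda : Λ.deg a = Λ.deg τ' := add_left_cancel hdeg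
  have h2' : Λ.src τ' = Λ.rng b := by rw [← Λ.src_comp ν τ' h]; exact h2
  have hassoc : Λ.comp (Λ.comp ν τ' h) b h2 = Λ.comp ν (Λ.comp τ' b h2') (by
      rw [h, ← Λ.rng_comp τ' b h2']) :=
    Λ.comp_assoc ν τ' b h h2 h2' _
  rw [hassoc] at heq
  have hab : a = Λ.comp τ' b h2' := cancel_left h1 _ heq
  have hdb : Λ.deg b = 0 := by
    have := congrArg Λ.deg hab
    rw [Λ.deg_comp, hda] at this
    exact left_eq_add.mp this
  have hb : b = Λ.src τ' := by rw [vtx_eq_rng hdb, ← h2']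
  exact ⟨by rw [hab]; exact comp_vtx_right hdb h2', hb⟩

section Aux2

lemma phi_one (SS : SelfSimilar k G Λ) (μ : Λ.Path) : SS.φ 1 μ = 1 := by
  have h := SS.φ_mul 1 1 μ
  rw [one_mul, SS.act_one] at h
  exact left_eq_mul.mp h

lemma mem_iota {t : Λ.Path × G × Λ.Path} {lam : Λ.Path} :
    t ∈ iota Λ G lam ↔ t = (lam, 1, lam) := Iff.rfl

lemma smul_empty_right (SS : SelfSimilar k G Λ) (E : Set (Λ.Path × G × Λ.Path)) :
    smul SS E ∅ = ∅ := by
  apply Set.eq_empty_iff_forall_notMem.mpr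
  rintro t ⟨μ, g, ν, ξ, h, η, α, β, -, h2, -⟩
  exact h2

lemma smul_empty_left (SS : SelfSimilar k G Λ) (E : Set (Λ.Path × G × Λ.Path)) :
    smul SS ∅ E = ∅ := by
  apply Set.eq_empty_iff_forall_notMem.mpr
  rintro t ⟨μ, g, ν, ξ, h, η, α, β, h1, -⟩
  exact h1

lemma isIdem_empty (SS : SelfSimilar k G Λ) : IsIdem SS ∅ :=
  ⟨⟨Set.finite_empty, fun _ ht => ht.elim, fun _ ht => ht.elim⟩, smul_empty_left SS ∅⟩

lemma isElem_iota (SS : SelfSimilar k G Λ) (lam : Λ.Path) : IsElem SS (iota Λ G lam) := by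
  refine ⟨Set.finite_singleton _, ?_, ?_⟩
  · rintro t ht
    rw [mem_iota] at ht; subst ht
    show Λ.src lam = SS.act 1 (Λ.src lam)
    rw [SS.act_one]
  · rintro t ht u hu hne
    rw [mem_iota] at ht hu
    exact absurd (ht.trans hu.symm) hne

lemma smul_iota_iota (SS : SelfSimilar k G Λ) (lam : Λ.Path) :
    smul SS (iota Λ G lam) (iota Λ G lam) = iota Λ G lam := by
  have hsv : Λ.src lam = Λ.rng (Λ.src lam) := (Λ.rng_vtx _ (Λ.deg_src lam)).symm
  ext t
  constructor
  · rintro ⟨μ, g, ν, ξ, h, η, α, β, hm1, hm2, hαβ, h1, h2, hteq⟩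
    rw [mem_iota, Prod.mk.injEq, Prod.mk.injEq] at hm1 hm2
    obtain ⟨rfl, rfl, rfl⟩ := hm1
    obtain ⟨rfl, rfl, rfl⟩ := hm2
    rw [lmin_self, Set.mem_singleton_iff, Prod.mk.injEq] at hαβ
    obtain ⟨rfl, rfl⟩ := hαβ
    rw [mem_iota, hteq, Prod.mk.injEq, Prod.mk.injEq]
    refine ⟨?_, ?_, ?_⟩
    · exact (comp_congr (SS.act_one _) h1 hsv).trans (Λ.comp_src_id _ hsv)
    · rw [phi_one, phi_one, one_mul]
    · exact (comp_congr (by rw [inv_one, SS.act_one]) h2 hsv).trans (Λ.comp_src_id _ hsv)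
  · intro ht
    rw [mem_iota] at ht; subst ht
    have h1 : Λ.src lam = Λ.rng (SS.act 1 (Λ.src lam)) := by rw [SS.act_one]; exact hsv
    have h2 : Λ.src lam = Λ.rng (SS.act 1⁻¹ (Λ.src lam)) := by
      rw [inv_one, SS.act_one]; exact hsv
    refine ⟨lam, 1, lam, lam, 1, lam, Λ.src lam, Λ.src lam, mem_iota.mpr rfl,
      mem_iota.mpr rfl, ?_, h1, h2, ?_⟩
    · rw [lmin_self]; rfl
    · rw [Prod.mk.injEq, Prod.mk.injEq]
      refine ⟨?_, ?_, ?_⟩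
      · exact ((comp_congr (SS.act_one (Λ.src lam)) h1 hsv).trans (Λ.comp_src_id lam hsv)).symm
      · rw [phi_one, phi_one, one_mul]
      · have e : SS.act 1⁻¹ (Λ.src lam) = Λ.src lam := by rw [inv_one, SS.act_one]
        exact ((comp_congr e h2 hsv).trans (Λ.comp_src_id lam hsv)).symm

lemma isIdem_iota (SS : SelfSimilar k G Λ) (lam : Λ.Path) : IsIdem SS (iota Λ G lam) :=
  ⟨isElem_iota SS lam, smul_iota_iota SS lam⟩

/-- Structure of idempotents: every element of an idempotent is `(μ, 1, μ)`. -/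
lemma idem_struct (SS : SelfSimilar k G Λ) {E : Set (Λ.Path × G × Λ.Path)}
    (hE : IsIdem SS E) {t : Λ.Path × G × Λ.Path} (ht : t ∈ E) :
    t.2.1 = 1 ∧ t.1 = t.2.2 := by
  obtain ⟨t1, tg, t2⟩ := t
  obtain ⟨⟨hfin, hsrc, horth⟩, hmul⟩ := hE
  have htE := ht
  rw [← hmul] at ht
  obtain ⟨μ, g, ν, ξ, h, η, α, β, hm1, hm2, hαβ, h1, h2, hteq⟩ := ht
  obtain ⟨hl1, hl2, hleq, hldeg⟩ := hαβ
  have e1 : (μ, g, ν) = (t1, tg, t2) := by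
    by_contra hne
    have horth1 := (horth _ hm1 _ htE hne).1
    have ht1 : t1 = Λ.comp μ (SS.act g α) h1 := congrArg Prod.fst hteq
    have hsv : Λ.src t1 = Λ.rng (Λ.src t1) := (Λ.rng_vtx _ (Λ.deg_src _)).symm
    have hmem : ((SS.act g α, Λ.src t1) : Λ.Path × Λ.Path) ∈ Λ.lmin μ t1 := by
      refine ⟨h1, hsv, ?_, ?_⟩
      · rw [Λ.comp_src_id t1 hsv]; exact ht1.symm
      · show Λ.deg μ + Λ.deg (SS.act g α) = Λ.deg μ ⊔ Λ.deg t1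
        rw [ht1, Λ.deg_comp, pi_sup_self_add]
    rw [horth1] at hmem
    exact hmem
  have e2 : (ξ, h, η) = (t1, tg, t2) := by
    by_contra hne
    have horth2 := (horth _ hm2 _ htE hne).2
    have ht2 : t2 = Λ.comp η (SS.act h⁻¹ β) h2 := congrArg (fun p => p.2.2) hteq
    have hsv : Λ.src t2 = Λ.rng (Λ.src t2) := (Λ.rng_vtx _ (Λ.deg_src _)).symm
    have hmem : ((SS.act h⁻¹ β, Λ.src t2) : Λ.Path × Λ.Path) ∈ Λ.lmin η t2 := by
      refine ⟨h2, hsv, ?_, ?_⟩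
      · rw [Λ.comp_src_id t2 hsv]; exact ht2.symm
      · show Λ.deg η + Λ.deg (SS.act h⁻¹ β) = Λ.deg η ⊔ Λ.deg t2
        rw [ht2, Λ.deg_comp, pi_sup_self_add]
    rw [horth2] at hmem
    exact hmem
  have hμ : t1 = μ := (congrArg Prod.fst e1).symm
  have hg : tg = g := (congrArg (fun p => p.2.1) e1).symm
  have hν : t2 = ν := (congrArg (fun p => p.2.2) e1).symm
  subst hμ; subst hg; subst hν
  have hξ : t1 = ξ := (congrArg Prod.fst e2).symm
  have hh : tg = h := (congrArg (fun p => p.2.1) e2).symm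
  have hη : t2 = η := (congrArg (fun p => p.2.2) e2).symm
  subst hξ; subst hh; subst hη
  have c1 : t1 = Λ.comp t1 (SS.act tg α) h1 := congrArg Prod.fst hteq
  have c2 : tg = SS.φ tg α * SS.φ tg (SS.act tg⁻¹ β) := congrArg (fun p => p.2.1) hteq
  have c3 : t2 = Λ.comp t2 (SS.act tg⁻¹ β) h2 := congrArg (fun p => p.2.2) hteq
  have hdα : Λ.deg α = 0 := by
    have := congrArg Λ.deg c1
    rw [Λ.deg_comp] at this
    have h0 := left_eq_add.mp this
    rw [SS.deg_act] at h0
    exact h0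
  have hdβ : Λ.deg β = 0 := by
    have := congrArg Λ.deg c3
    rw [Λ.deg_comp] at this
    have h0 := left_eq_add.mp this
    rw [SS.deg_act] at h0
    exact h0
  have e3 : t2 = t1 := (comp_vtx_right hdα hl1).symm.trans
    (hleq.trans (comp_vtx_right hdβ hl2))
  have hφα : SS.φ tg α = tg := SS.φ_vtx tg α hdα
  have hφβ : SS.φ tg (SS.act tg⁻¹ β) = tg := SS.φ_vtx tg _ (by rw [SS.deg_act]; exact hdβ)
  rw [hφα, hφβ] at c2
  exact ⟨left_eq_mul.mp c2, e3.symm⟩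

lemma locallyExhausted_one (SS : SelfSimilar k G Λ) : LocallyExhausted SS 1 := by
  intro v hv
  refine ⟨{v}, Set.finite_singleton _, ?_, ?_⟩
  · rintro τ hτ
    rw [Set.mem_singleton_iff] at hτ; subst hτ
    exact ⟨⟨SS.act_one τ, phi_one SS τ⟩, Λ.rng_vtx τ hv⟩
  · intro τ hτ hr
    refine ⟨v, rfl, ?_⟩
    have hsv : Λ.src τ = Λ.rng (Λ.src τ) := (Λ.rng_vtx _ (Λ.deg_src τ)).symm
    have h2 : Λ.src v = Λ.rng τ := by rw [Λ.src_vtx v hv, hr]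
    have hmem : ((Λ.src τ, τ) : Λ.Path × Λ.Path) ∈ Λ.lmin τ v := by
      refine ⟨hsv, h2, ?_, ?_⟩
      · rw [Λ.comp_src_id τ hsv, comp_vtx_left hv h2]
      · rw [Λ.deg_src, add_zero, hv]
        exact (sup_eq_left.mpr (by intro i; exact Nat.zero_le _)).symm
    intro he
    rw [he] at hmem
    exact hmem

/-- For a vertex `v` with `τ ∈ v⬝SF_g`, the idempotent `ι_τ` lies below `{(v,g,v)}`. -/
lemma smul_vgv_iota (SS : SelfSimilar k G Λ) {v : Λ.Path} (hv : Λ.deg v = 0) {g : G}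
    {τ : Λ.Path} (hτ : τ ∈ SFg SS g) (hr : Λ.rng τ = v) :
    smul SS {(v, g, v)} (iota Λ G τ) = iota Λ G τ := by
  have hsv : Λ.src τ = Λ.rng (Λ.src τ) := (Λ.rng_vtx _ (Λ.deg_src τ)).symm
  ext t
  constructor
  · rintro ⟨μ, g', ν, ξ, h, η, α, β, hm1, hm2, hαβ, h1, h2, hteq⟩
    have hm1' : (μ, g', ν) = (v, g, v) := hm1
    rw [Prod.mk.injEq, Prod.mk.injEq] at hm1'
    obtain ⟨rfl, rfl, rfl⟩ := hm1'
    rw [mem_iota, Prod.mk.injEq, Prod.mk.injEq] at hm2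
    obtain ⟨rfl, rfl, rfl⟩ := hm2
    obtain ⟨hrng, hα, hβ⟩ := mem_lmin_vtx hv hαβ
    rw [mem_iota, hteq, Prod.mk.injEq, Prod.mk.injEq]
    refine ⟨?_, ?_, ?_⟩
    · exact (comp_vtx_left hv h1).trans (by rw [hα, hτ.1])
    · rw [hα, hτ.2, phi_one, one_mul]
    · exact (comp_congr (by rw [inv_one, SS.act_one, hβ]) h2 hsv).trans
        (Λ.comp_src_id _ hsv)
  · intro ht
    rw [mem_iota] at ht; subst ht
    have h1 : Λ.src v = Λ.rng (SS.act g τ) := by rw [hτ.1, Λ.src_vtx v hv, hr]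
    have h2 : Λ.src τ = Λ.rng (SS.act 1⁻¹ (Λ.src τ)) := by
      rw [inv_one, SS.act_one]; exact hsv
    refine ⟨v, g, v, τ, 1, τ, τ, Λ.src τ, rfl, mem_iota.mpr rfl,
      vtx_mem_lmin hv hr, h1, h2, ?_⟩
    rw [Prod.mk.injEq, Prod.mk.injEq]
    refine ⟨?_, ?_, ?_⟩
    · exact ((comp_vtx_left hv h1).trans hτ.1).symm
    · rw [hτ.2, phi_one, one_mul]
    · exact ((comp_congr (by rw [inv_one, SS.act_one]) h2 hsv).trans
        (Λ.comp_src_id _ hsv)).symm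

/-- Elements of idempotents below `{(v,g,v)}` come from strongly fixed paths. -/
lemma le_vgv_struct (SS : SelfSimilar k G Λ) {v : Λ.Path} (hv : Λ.deg v = 0) {g : G}
    {E : Set (Λ.Path × G × Λ.Path)} (hE : IsIdem SS E)
    (hsm : smul SS {(v, g, v)} E = E) {t : Λ.Path × G × Λ.Path} (ht : t ∈ E) :
    t.1 ∈ SFg SS g ∧ Λ.rng t.1 = v := by
  obtain ⟨hg1, hts⟩ := idem_struct SS hE ht
  have ht' := ht
  rw [← hsm] at ht'
  obtain ⟨μ, g', ν, ξ, h, η, α, β, hm1, hm2, hαβ, h1, h2, hteq⟩ := ht'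
  have hm1' : (μ, g', ν) = (v, g, v) := hm1
  have hμ : μ = v := congrArg Prod.fst hm1'
  have hg' : g' = g := congrArg (fun p => p.2.1) hm1'
  have hν : ν = v := congrArg (fun p => p.2.2) hm1'
  have hstruct2 := idem_struct SS hE hm2
  have hh : h = 1 := hstruct2.1
  have hξη : ξ = η := hstruct2.2
  rw [hν] at hαβ
  obtain ⟨hrngξ, hα, hβ⟩ := mem_lmin_vtx hv hαβ
  have c1 : t.1 = Λ.comp μ (SS.act g' α) h1 := congrArg Prod.fst hteq
  have c2 : t.2.1 = SS.φ g' α * SS.φ h (SS.act h⁻¹ β) := congrArg (fun p => p.2.1) hteq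
  have c3 : t.2.2 = Λ.comp η (SS.act h⁻¹ β) h2 := congrArg (fun p => p.2.2) hteq
  have hvμ : Λ.deg μ = 0 := by rw [hμ]; exact hv
  have c1' : t.1 = SS.act g' α := c1.trans (comp_vtx_left hvμ h1)
  have hsvη : Λ.src η = Λ.rng (Λ.src η) := (Λ.rng_vtx _ (Λ.deg_src η)).symm
  have e : SS.act h⁻¹ β = Λ.src η := by rw [hh, inv_one, SS.act_one, hβ, hξη]
  have c3' : t.2.2 = η := c3.trans ((comp_congr e h2 hsvη).trans (Λ.comp_src_id _ hsvη))
  have hφβ : SS.φ h (SS.act h⁻¹ β) = 1 := by rw [hh]; exact phi_one SS _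
  have c2' : t.2.1 = SS.φ g' α := by rw [c2, hφβ, mul_one]
  have htξ : t.1 = ξ := hts.trans (c3'.trans hξη.symm)
  have hc1'' : t.1 = SS.act g ξ := by rw [c1', hg', hα]
  refine ⟨⟨?_, ?_⟩, ?_⟩
  · show SS.act g t.1 = t.1
    rw [htξ, ← hc1'', htξ]
  · show SS.φ g t.1 = 1
    rw [htξ, ← hα, ← hg', ← c2']
    exact hg1
  · rw [htξ]; exact hrngξ

/-- For `t0 = (ν,g,ν) ∈ F` and `τ' ∈ s(ν)⬝SF_g`, `ι_{ντ'}` lies below `F`. -/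
lemma smul_F_iota (SS : SelfSimilar k G Λ) {F : Set (Λ.Path × G × Λ.Path)}
    (hF : IsElem SS F) {t0 : Λ.Path × G × Λ.Path} (ht0 : t0 ∈ F)
    (hμν : t0.1 = t0.2.2) {τ' : Λ.Path} (hτ' : τ' ∈ SFg SS t0.2.1)
    (hm : Λ.src t0.2.2 = Λ.rng τ') :
    smul SS F (iota Λ G (Λ.comp t0.2.2 τ' hm)) = iota Λ G (Λ.comp t0.2.2 τ' hm) := by
  have hsl : Λ.src (Λ.comp t0.2.2 τ' hm) = Λ.rng (Λ.src (Λ.comp t0.2.2 τ' hm)) :=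
    (Λ.rng_vtx _ (Λ.deg_src _)).symm
  ext t
  constructor
  · rintro ⟨μ, g', ν', ξ, h, η, α, β, hm1, hm2, hαβ, h1, h2, hteq⟩
    have hm2' : (ξ, h, η) = (Λ.comp t0.2.2 τ' hm, 1, Λ.comp t0.2.2 τ' hm) := hm2
    have hξ : ξ = Λ.comp t0.2.2 τ' hm := congrArg Prod.fst hm2'
    have hh : h = 1 := congrArg (fun p => p.2.1) hm2'
    have hη : η = Λ.comp t0.2.2 τ' hm := congrArg (fun p => p.2.2) hm2'
    rw [hξ] at hαβ
    by_cases hcase : (μ, g', ν') = t0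
    · have hμ : μ = t0.1 := by rw [← hcase]
      have hg' : g' = t0.2.1 := by rw [← hcase]
      have hν' : ν' = t0.2.2 := by rw [← hcase]
      rw [hν'] at hαβ
      obtain ⟨hα, hβ⟩ := mem_lmin_comp_right hm hαβ
      rw [mem_iota, hteq, Prod.mk.injEq, Prod.mk.injEq]
      have h1' : Λ.src μ = Λ.rng τ' := by rw [hμ, hμν]; exact hm
      refine ⟨?_, ?_, ?_⟩
      · have e : SS.act g' α = τ' := by rw [hg', hα, hτ'.1]
        exact (comp_congr e h1 h1').trans (comp_congr_left (hμ.trans hμν) h1' hm)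
      · rw [hg', hα, hτ'.2, hh, phi_one, one_mul]
      · have h2' : Λ.src (Λ.comp t0.2.2 τ' hm) = Λ.rng (SS.act h⁻¹ β) := by
          rw [← hη]; exact h2
        have e2 : SS.act h⁻¹ β = Λ.src (Λ.comp t0.2.2 τ' hm) := by
          rw [hh, inv_one, SS.act_one, hβ, Λ.src_comp]
        exact (comp_congr_left hη h2 h2').trans
          ((comp_congr e2 h2' hsl).trans (Λ.comp_src_id _ hsl))
    · exfalso
      have horth := (hF.2.2 _ hm1 _ ht0 hcase).2
      obtain ⟨l1, l2, leq, ldeg⟩ := hαβ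
      have hτβ : Λ.src τ' = Λ.rng β := by
        rw [← Λ.src_comp t0.2.2 τ' hm]; exact l2
      have h4 : Λ.src t0.2.2 = Λ.rng (Λ.comp τ' β hτβ) := by
        rw [Λ.rng_comp]; exact hm
      have e' : Λ.comp ν' α l1 = Λ.comp t0.2.2 (Λ.comp τ' β hτβ) h4 :=
        leq.trans (Λ.comp_assoc t0.2.2 τ' β hm l2 hτβ h4)
      obtain ⟨p, hp⟩ := mce l1 h4 e'
      rw [horth] at hp
      exact hp
  · intro ht
    rw [mem_iota] at ht; subst ht
    have h1'' : Λ.src t0.1 = Λ.rng τ' := by rw [hμν]; exact hm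
    have h1 : Λ.src t0.1 = Λ.rng (SS.act t0.2.1 τ') := by rw [hτ'.1]; exact h1''
    have h2 : Λ.src (Λ.comp t0.2.2 τ' hm) =
        Λ.rng (SS.act (1 : G)⁻¹ (Λ.src (Λ.comp t0.2.2 τ' hm))) := by
      rw [inv_one, SS.act_one]; exact hsl
    have hlmin : ((τ', Λ.src (Λ.comp t0.2.2 τ' hm)) : Λ.Path × Λ.Path) ∈
        Λ.lmin t0.2.2 (Λ.comp t0.2.2 τ' hm) := by
      refine ⟨hm, hsl, (Λ.comp_src_id _ hsl).symm, ?_⟩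
      rw [Λ.deg_comp]
      exact (pi_sup_self_add _ _).symm
    refine ⟨t0.1, t0.2.1, t0.2.2, Λ.comp t0.2.2 τ' hm, 1, Λ.comp t0.2.2 τ' hm,
      τ', Λ.src (Λ.comp t0.2.2 τ' hm), ht0, mem_iota.mpr rfl, hlmin, h1, h2, ?_⟩
    rw [Prod.mk.injEq, Prod.mk.injEq]
    refine ⟨?_, ?_, ?_⟩
    · exact ((comp_congr hτ'.1 h1 h1'').trans (comp_congr_left hμν h1'' hm)).symm
    · rw [hτ'.2, phi_one, one_mul]
    · exact ((comp_congr (by rw [inv_one, SS.act_one]) h2 hsl).trans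
        (Λ.comp_src_id _ hsl)).symm

end Aux2

end Aux

/-- Hausdorffness criterion, in the Exel–Pardo formulation:
every principal ideal `J_F`, `F ∈ S_{G,Λ}`, admits a finite cover in
`E(S_{G,Λ})` if and only if `SF_g` is locally exhausted for every `g ≠ e_G`. -/
theorem stmt10 (SS : SelfSimilar k G Λ) (hfa : Λ.FinitelyAligned) :
    (∀ F, IsElem SS F → HasFiniteCover SS F) ↔
      ∀ g : G, g ≠ 1 → LocallyExhausted SS g := by
  constructor
  · -- finite covers ⇒ local exhaustion
    intro hcov g hg v hv
    by_cases hgv : SS.act g v = v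
    · have hFel : IsElem SS {(v, g, v)} := by
        refine ⟨Set.finite_singleton _, ?_, ?_⟩
        · rintro t ht
          have ht' : t = (v, g, v) := ht
          subst ht'
          show Λ.src v = SS.act g (Λ.src v)
          rw [Λ.src_vtx v hv, hgv]
        · rintro t ht u hu hne
          have h1 : t = (v, g, v) := ht
          have h2 : u = (v, g, v) := hu
          exact absurd (h1.trans h2.symm) hne
      obtain ⟨C, hCfin, hCmem, hCcov⟩ := hcov _ hFel
      refine ⟨{τ | ∃ E ∈ C, ∃ t ∈ E, t.1 = τ}, ?_, ?_, ?_⟩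
      · apply Set.Finite.subset (Set.Finite.biUnion hCfin
          (fun E hE => ((hCmem E hE).1.1.1).image Prod.fst))
        rintro τ ⟨E, hEC, t, htE, rfl⟩
        exact Set.mem_biUnion hEC ⟨t, htE, rfl⟩
      · rintro τ ⟨E, hEC, t, htE, rfl⟩
        exact le_vgv_struct SS hv (hCmem E hEC).1 (hCmem E hEC).2 htE
      · intro τ hτ hr
        have hii := isIdem_iota SS τ
        have hsm := smul_vgv_iota SS hv hτ hr
        have hne : iota Λ G τ ≠ ∅ :=
          Set.nonempty_iff_ne_empty.mp ⟨_, mem_iota.mpr rfl⟩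
        obtain ⟨E', hE'C, hneq⟩ := hCcov _ hii hsm hne
        obtain ⟨t0, ht0⟩ := Set.nonempty_iff_ne_empty.mpr hneq
        obtain ⟨μ, g', ν, ξ, h, η, α, β, hm1, hm2, hαβ, h1, h2, hteq⟩ := ht0
        have hμ1 : (μ, g', ν) = (τ, 1, τ) := hm1
        have hν : ν = τ := congrArg (fun p => p.2.2) hμ1
        refine ⟨ξ, ⟨E', hE'C, (ξ, h, η), hm2, rfl⟩, ?_⟩
        intro h0
        rw [hν, h0] at hαβ
        exact hαβ
    · refine ⟨∅, Set.finite_empty, fun τ hτ => hτ.elim, ?_⟩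
      intro τ hτ hr
      exfalso
      apply hgv
      rw [← hr]
      exact (SS.rng_act g τ).symm.trans (by rw [hτ.1])
  · -- local exhaustion ⇒ finite covers
    intro hLE F hF
    have hLE'' : ∀ (g : G) (v : Λ.Path), Λ.deg v = 0 → ∃ M : Set Λ.Path, M.Finite ∧
        (∀ τ ∈ M, τ ∈ SFg SS g ∧ Λ.rng τ = v) ∧
        ∀ τ ∈ SFg SS g, Λ.rng τ = v → ∃ τ' ∈ M, Λ.lmin τ τ' ≠ ∅ := by
      intro g v hv
      by_cases hg : g = 1
      · subst hg; exact locallyExhausted_one SS v hv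
      · exact hLE g hg v hv
    choose M hMfin hMmem hMexh using hLE''
    classical
    refine ⟨{E | ∃ t ∈ F, t.1 = t.2.2 ∧
      ∃ τ' ∈ M t.2.1 (Λ.src t.2.2) (Λ.deg_src t.2.2),
      ∃ h : Λ.src t.2.2 = Λ.rng τ', E = iota Λ G (Λ.comp t.2.2 τ' h)}, ?_, ?_, ?_⟩
    · -- finiteness
      apply Set.Finite.subset (Set.Finite.biUnion hF.1 (fun t _ =>
        Set.Finite.image (fun τ' => if h : Λ.src t.2.2 = Λ.rng τ' then
          iota Λ G (Λ.comp t.2.2 τ' h) else ∅)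
          (hMfin t.2.1 (Λ.src t.2.2) (Λ.deg_src t.2.2))))
      rintro E ⟨t, htF, hμν, τ', hτ'M, h, rfl⟩
      refine Set.mem_biUnion htF ⟨τ', hτ'M, ?_⟩
      exact dif_pos h
    · rintro E ⟨t, htF, hμν, τ', hτ'M, h, rfl⟩
      have spec := hMmem t.2.1 (Λ.src t.2.2) (Λ.deg_src t.2.2) τ' hτ'M
      exact ⟨isIdem_iota SS _, smul_F_iota SS hF htF hμν spec.1 h⟩
    · -- covering
      intro E hEidem hEsm hEne
      obtain ⟨t0, ht0E⟩ := Set.nonempty_iff_ne_empty.mpr hEne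
      obtain ⟨hg1, hts⟩ := idem_struct SS hEidem ht0E
      have ht0' := ht0E
      rw [← hEsm] at ht0'
      obtain ⟨μ, g', ν, ξ, h, η, α, β, hm1, hm2, hαβ, h1, h2, hteq⟩ := ht0'
      have hstruct2 := idem_struct SS hEidem hm2
      have hh : h = 1 := hstruct2.1
      have hξη : ξ = η := hstruct2.2
      obtain ⟨l1, l2, leq, ldeg⟩ := hαβ
      have c1 : t0.1 = Λ.comp μ (SS.act g' α) h1 := congrArg Prod.fst hteq
      have c2 : t0.2.1 = SS.φ g' α * SS.φ h (SS.act h⁻¹ β) :=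
        congrArg (fun p => p.2.1) hteq
      have c3 : t0.2.2 = Λ.comp η (SS.act h⁻¹ β) h2 := congrArg (fun p => p.2.2) hteq
      have hφβ : SS.φ h (SS.act h⁻¹ β) = 1 := by rw [hh]; exact phi_one SS _
      have c2' : t0.2.1 = SS.φ g' α := by rw [c2, hφβ, mul_one]
      have hφα : SS.φ g' α = 1 := c2'.symm.trans hg1
      have h2' : Λ.src ξ = Λ.rng (SS.act h⁻¹ β) := by rw [hξη]; exact h2
      have e5 : SS.act h⁻¹ β = β := by rw [hh, inv_one, SS.act_one]
      have c3' : t0.2.2 = Λ.comp ξ β l2 := c3.trans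
        ((comp_congr_left hξη.symm h2 h2').trans (comp_congr e5 h2' l2))
      have hE1' : t0.1 = Λ.comp ν α l1 := hts.trans (c3'.trans leq.symm)
      have E1 : Λ.comp μ (SS.act g' α) h1 = Λ.comp ν α l1 := c1.symm.trans hE1'
      have hdμν : Λ.deg μ = Λ.deg ν := by
        have := congrArg Λ.deg E1
        rw [Λ.deg_comp, Λ.deg_comp, SS.deg_act] at this
        exact add_right_cancel this
      obtain ⟨hμν, hact⟩ := factor_pair_eq h1 l1 E1 hdμν (SS.deg_act g' α)
      -- α is strongly fixed by g'
      have hαSF : α ∈ SFg SS g' := ⟨hact, hφα⟩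
      have hrα : Λ.rng α = Λ.src ν := l1.symm
      obtain ⟨τ', hτ'M, hlne⟩ := hMexh g' (Λ.src ν) (Λ.deg_src ν) α hαSF hrα
      have hm' : Λ.src ν = Λ.rng τ' :=
        ((hMmem g' (Λ.src ν) (Λ.deg_src ν) τ' hτ'M).2).symm
      refine ⟨iota Λ G (Λ.comp ν τ' hm'), ⟨(μ, g', ν), hm1, hμν, τ', hτ'M, hm', rfl⟩, ?_⟩
      obtain ⟨⟨a, b⟩, hab⟩ := Set.nonempty_iff_ne_empty.mpr hlne
      have hmm := lmin_comp_comp l1 hm' hab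
      rw [← hE1'] at hmm
      rw [hts] at hmm
      have hmm' := hmm
      obtain ⟨p1, p2, -, -⟩ := hmm'
      apply Set.nonempty_iff_ne_empty.mp
      have h1'' : Λ.src t0.1 = Λ.rng (SS.act t0.2.1 a) := by
        rw [hg1, SS.act_one, hts]; exact p1
      have h2'' : Λ.src (Λ.comp ν τ' hm') = Λ.rng (SS.act (1 : G)⁻¹ b) := by
        rw [inv_one, SS.act_one]; exact p2
      exact ⟨_, t0.1, t0.2.1, t0.2.2, Λ.comp ν τ' hm', 1, Λ.comp ν τ' hm', a, b,
        ht0E, mem_iota.mpr rfl, hmm, h1'', h2'', rfl⟩
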